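/- arXiv:2304.01729 — 2 statements merged into one kernel-verified Lean document; each statement's English description precedes it below -/
import Mathlib

section
/- For natural numbers d ≥ 7 and t with 0 ≤ t and 2t + 2 ≤ d, the graph B_{d,d+t} has exactly d² + dt + t + 1 edges. -/
lemma count_range (n t : ℕ) : ∑ k ∈ Finset.range n, (if t ≤ k then 1 else 0) = n - t := by
  rw [← Finset.card_filter]
  have : Finset.filter (fun k => t ≤ k) (Finset.range n) = Finset.Ico t n := by
    ext k; simp [Finset.mem_Ico]; omega
  rw [this, Nat.card_Ico]

lemma count_match (n t : ℕ) (hn : 0 < n) (i : Fin n) :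
    ∑ j : Fin n, (if t ≤ (j.val + n - i.val) % n then 1 else 0) = n - t := by
  haveI : NeZero n := ⟨hn.ne'⟩
  have key := Fintype.sum_equiv (Equiv.subRight i)
    (fun j : Fin n => if t ≤ (j.val + n - i.val) % n then 1 else 0)
    (fun k : Fin n => if t ≤ k.val then 1 else 0) ?_
  · rw [key, Fin.sum_univ_eq_sum_range (fun k => if t ≤ k then 1 else 0), count_range]
  · intro j
    simp only [Equiv.subRight_apply, Fin.sub_def]
    show (if t ≤ (j.val + n - i.val) % n then 1 else 0) = (if t ≤ (n - i.val + j.val) % n then 1 else 0)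
    congr 1
    rw [Nat.add_comm (n - i.val) j.val, ← Nat.add_sub_assoc i.isLt.le]


/-- Vertex set of the graph `B_{d,d+t}`: two "sides" `A` and `B`, each split as
`F` (of size `d-1`) and `H` (of size `t+1`), together with one extra vertex `v`. -/
abbrev BVert (d t : ℕ) : Type :=
  (Fin (d - 1) ⊕ Fin (t + 1)) ⊕ ((Fin (d - 1) ⊕ Fin (t + 1)) ⊕ Unit)

/-- Base relation for `B_{d,d+t}`: `F_A`-`F_B` is a complete bipartite graph minus
`t` disjoint perfect matchings (the pairs at cyclic shifts `0, …, t-1`); `F_A`-`H_B`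
and `F_B`-`H_A` are complete bipartite; the extra vertex `v` is joined to all of
`H_A ∪ H_B`. -/
def BRel (d t : ℕ) : BVert d t → BVert d t → Prop
  | Sum.inl (Sum.inl i), Sum.inr (Sum.inl (Sum.inl j)) =>
      t ≤ (j.val + (d - 1) - i.val) % (d - 1)
  | Sum.inl (Sum.inl _), Sum.inr (Sum.inl (Sum.inr _)) => True
  | Sum.inl (Sum.inr _), Sum.inr (Sum.inl (Sum.inl _)) => True
  | Sum.inr (Sum.inr _), Sum.inl (Sum.inr _) => True
  | Sum.inr (Sum.inr _), Sum.inr (Sum.inl (Sum.inr _)) => True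
  | _, _ => False

/-- The graph `B_{d,d+t}`. -/
def BGraph (d t : ℕ) : SimpleGraph (BVert d t) := SimpleGraph.fromRel (BRel d t)

noncomputable instance (d t : ℕ) : DecidableRel (BGraph d t).Adj :=
  Classical.decRel _

theorem stmt8 (d t : ℕ) (hd : 7 ≤ d) (ht : 2 * t + 2 ≤ d) :
    (BGraph d t).edgeFinset.card = d ^ 2 + d * t + t + 1 := by
  classical
  have key := SimpleGraph.sum_degrees_eq_twice_card_edges (BGraph d t)
  have hdeg : ∀ x : BVert d t, (BGraph d t).degree x
      = ∑ y : BVert d t, if (BGraph d t).Adj x y then 1 else 0 := by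
    intro x
    rw [← SimpleGraph.card_neighborFinset_eq_degree, SimpleGraph.neighborFinset_eq_filter,
      Finset.card_filter]
  rw [Finset.sum_congr rfl (fun x _ => hdeg x)] at key
  simp only [Fintype.sum_sum_type, BGraph, SimpleGraph.fromRel_adj, BRel,
    Finset.sum_const, Finset.card_univ, Fintype.card_fin, Fintype.card_unit,
    Fintype.univ_unit] at key
  set_option maxHeartbeats 1000000 in
  simp only [ne_eq, reduceCtorEq, not_false_eq_true, true_and, false_and, or_false, false_or,
    if_true, if_false, and_true, and_false, iff_true, iff_false, or_self, ite_true, ite_false,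
    not_true, Sum.inl.injEq, Sum.inr.injEq] at key
  have hn : 0 < d - 1 := by omega
  have hm : ∀ i : Fin (d-1), ∑ j : Fin (d-1), (if t ≤ (j.val + (d-1) - i.val) % (d-1) then 1 else 0) = (d-1) - t :=
    fun i => count_match _ _ hn i
  simp only [Finset.sum_add_distrib, hm, Finset.sum_const, Finset.card_univ, Fintype.card_fin,
    smul_eq_mul, mul_zero, mul_one, add_zero, zero_add, Finset.sum_singleton] at key
  rw [Finset.sum_comm (s := (Finset.univ : Finset (Fin (d-1)))) (t := (Finset.univ : Finset (Fin (d-1))))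
    (f := fun x x1 => if t ≤ (x.val + (d - 1) - x1.val) % (d - 1) then 1 else 0)] at key
  simp only [hm, Finset.sum_const, Finset.card_univ, Fintype.card_fin, smul_eq_mul] at key
  simp only [Finset.card_singleton, mul_one, one_mul] at key
  obtain ⟨s, rfl⟩ : ∃ s, d = s + t + 2 := ⟨d - t - 2, by omega⟩
  have h2 : s + t + 2 - 1 - t = s + 1 := by omega
  have h1 : s + t + 2 - 1 = s + t + 1 := by omega
  simp only [h2, h1] at key
  have h3 : s + t + 1 - t = s + 1 := by omega
  simp only [h3] at key
  have hN : (s + t + 1) * (s + 1) + ((s + t + 1) * t + (s + t + 1)) + ((t + 1) * (s + t + 1) + (t + 1)) +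
      ((s + t + 1) * (s + 1) + ((s + t + 1) * t + (s + t + 1)) + ((t + 1) * (s + t + 1) + (t + 1)) +
        (t + 1 + (t + 1))) = 2 * ((s + t + 2) ^ 2 + (s + t + 2) * t + t + 1) := by ring
  rw [hN] at key
  exact (Nat.eq_of_mul_eq_mul_left two_pos key).symm
end

section
/- For natural numbers d ≥ 7 and t with 0 ≤ t and 2t + 2 ≤ d, the matching number of B_{d,d+t} equals d + t. -/
/-- The matching number of a simple graph: the largest size of a matching. -/
noncomputable def matchingNumber {V : Type*} (G : SimpleGraph V) : ℕ :=
  sSup {n | ∃ M : G.Subgraph, M.IsMatching ∧ M.edgeSet.ncard = n}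

/-!
`B_{d,d+t}` has `2(d+t)+1` vertices, so every matching has at most `d+t` edges. Conversely, an
involution of the vertex set with a single fixed point sends every other vertex to a
neighbour, and its orbits of size two form a matching of `d+t` edges.
-/

open Function

namespace SimpleGraph
variable {V : Type*} {G : SimpleGraph V}

namespace Subgraph

theorem IsMatching.ncard_verts_eq_two_mul_ncard_edgeSet [Finite V] {M : G.Subgraph}
    (h : M.IsMatching) : M.verts.ncard = 2 * M.edgeSet.ncard := by
  classical
  have := Fintype.ofFinite V
  rw [isMatching_iff_forall_degree] at h
  have hdeg (v : M.verts) : M.coe.degree v = 1 := by rw [coe_degree]; convert h v v.2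
  rw [← M.image_coe_edgeSet_coe,
    Set.ncard_image_of_injective _ (Sym2.map.injective Subtype.val_injective),
    ← M.coe.coe_edgeFinset, Set.ncard_coe_finset, ← sum_degrees_eq_twice_card_edges,
    Finset.sum_congr rfl fun v _ => by convert hdeg v, Finset.sum_const, smul_eq_mul, mul_one,
    Finset.card_univ, ← Nat.card_eq_fintype_card, Nat.card_coe_set_eq]

def ofInvolutive (G : SimpleGraph V) {p : V → V} (hp : Involutive p) : G.Subgraph where
  verts := {x | G.Adj x (p x)}
  Adj x y := G.Adj x y ∧ p x = y
  adj_sub h := h.1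
  edge_vert := by rintro x _ ⟨h, rfl⟩; exact h
  symm := ⟨by rintro x _ ⟨h, rfl⟩; exact ⟨h.symm, hp x⟩⟩

theorem isMatching_ofInvolutive {p : V → V} (hp : Involutive p) :
    (ofInvolutive G hp).IsMatching :=
  fun x hx => ⟨p x, ⟨hx, rfl⟩, fun _ h => h.2.symm⟩

theorem IsMatching.ncard_edgeSet_le_matchingNumber [Finite V] {M : G.Subgraph}
    (hM : M.IsMatching) : M.edgeSet.ncard ≤ matchingNumber G := by
  refine le_csSup ⟨Nat.card V, ?_⟩ ⟨M, hM, rfl⟩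
  rintro _ ⟨M', hM', rfl⟩
  have := hM'.ncard_verts_eq_two_mul_ncard_edgeSet ▸ Set.ncard_le_card M'.verts
  omega

end Subgraph

theorem two_mul_matchingNumber_le_card [Finite V] (G : SimpleGraph V) :
    2 * matchingNumber G ≤ Nat.card V := by
  have hne : {n | ∃ M : G.Subgraph, M.IsMatching ∧ M.edgeSet.ncard = n}.Nonempty :=
    ⟨0, ⊥, by simp [Subgraph.IsMatching], by simp⟩
  suffices matchingNumber G ≤ Nat.card V / 2 by omega
  refine csSup_le hne ?_
  rintro _ ⟨M, hM, rfl⟩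
  have := hM.ncard_verts_eq_two_mul_ncard_edgeSet ▸ Set.ncard_le_card M.verts
  omega

end SimpleGraph

namespace BGraph
variable {d t : ℕ}

theorem card_bVert (h : 1 ≤ d) : Nat.card (BVert d t) = 2 * (d + t) + 1 := by
  simp only [Nat.card_eq_fintype_card, Fintype.card_sum, Fintype.card_fin, Fintype.card_unit]
  omega

def unmatched (h : t + 2 ≤ d) : BVert d t := .inr (.inl (.inl ⟨d - 2, by omega⟩))

/-- Pairs `F_A k`–`H_B k` for `k ≤ t`, `v`–`H_A 0`, `H_A k`–`F_B (k-1)` for `1 ≤ k ≤ t`, and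
`F_A (j+1)`–`F_B j` for `t ≤ j < d - 2` (cyclic shift `d - 2 ≥ t`, so these are edges);
its only fixed point is `F_B (d-2)`. -/
def partner (h : t + 2 ≤ d) : BVert d t → BVert d t
  | .inl (.inl i) =>
      if hi : i.val ≤ t then .inr (.inl (.inr ⟨i, by omega⟩))
      else .inr (.inl (.inl ⟨i - 1, by omega⟩))
  | .inl (.inr k) =>
      if hk : k.val = 0 then .inr (.inr ())
      else .inr (.inl (.inl ⟨k - 1, by omega⟩))
  | .inr (.inl (.inl j)) =>
      if hj : j.val < t then .inl (.inr ⟨j + 1, by omega⟩)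
      else if hj' : j.val = d - 2 then .inr (.inl (.inl j))
      else .inl (.inl ⟨j + 1, by omega⟩)
  | .inr (.inl (.inr k)) => .inl (.inl ⟨k, by omega⟩)
  | .inr (.inr _) => .inl (.inr 0)

theorem partner_involutive (h : t + 2 ≤ d) : Involutive (partner h) := by
  rintro ((i | k) | ((j | k) | u)) <;> grind [partner]

theorem partner_unmatched (h : t + 2 ≤ d) : partner h (unmatched h) = unmatched h := by
  grind [partner, unmatched]

theorem bRel_of_val_add_one_eq (h : t + 2 ≤ d) {i j : Fin (d - 1)} (hij : j.val + 1 = i.val) :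
    BRel d t (.inl (.inl i)) (.inr (.inl (.inl j))) := by
  change t ≤ (j.val + (d - 1) - i.val) % (d - 1)
  rw [show j.val + (d - 1) - i.val = d - 2 by omega, Nat.mod_eq_of_lt (by omega)]
  omega

theorem adj_partner (h : t + 2 ≤ d) {x : BVert d t} (hx : x ≠ unmatched h) :
    (BGraph d t).Adj x (partner h x) := by
  rw [BGraph, SimpleGraph.fromRel_adj]
  rcases x with ((i | k) | ((j | k) | u)) <;>
    grind [partner, BRel, unmatched, bRel_of_val_add_one_eq]

theorem exists_isMatching_ncard_edgeSet (h : t + 2 ≤ d) :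
    ∃ M : (BGraph d t).Subgraph, M.IsMatching ∧ M.edgeSet.ncard = d + t := by
  let M := SimpleGraph.Subgraph.ofInvolutive (BGraph d t) (partner_involutive h)
  have hverts : M.verts = {unmatched h}ᶜ := by
    ext x
    refine ⟨fun hx hxu => ?_, adj_partner h⟩
    change (BGraph d t).Adj x (partner h x) at hx
    rw [Set.mem_singleton_iff.mp hxu, partner_unmatched] at hx
    exact (BGraph d t).irrefl hx
  have hM : M.IsMatching := SimpleGraph.Subgraph.isMatching_ofInvolutive (partner_involutive h)
  refine ⟨M, hM, ?_⟩
  have := hM.ncard_verts_eq_two_mul_ncard_edgeSet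
  rw [hverts, Set.ncard_compl, Set.ncard_singleton, card_bVert (by omega)] at this
  omega

end BGraph

theorem stmt11_general (d t : ℕ) (ht : 2 * t + 2 ≤ d) :
    matchingNumber (BGraph d t) = d + t := by
  obtain ⟨M, hM, hcard⟩ := BGraph.exists_isMatching_ncard_edgeSet (show t + 2 ≤ d by omega)
  have hle := (BGraph d t).two_mul_matchingNumber_le_card
  rw [BGraph.card_bVert (by omega)] at hle
  exact le_antisymm (by omega) (hcard ▸ hM.ncard_edgeSet_le_matchingNumber)

theorem stmt11 (d t : ℕ) (hd : 7 ≤ d) (ht : 2 * t + 2 ≤ d) :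
    matchingNumber (BGraph d t) = d + t :=
  stmt11_general d t ht
end
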